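/- arXiv:1808.07693 — 2 statements merged into one kernel-verified Lean document; each statement's English description precedes it below -/
import Mathlib

section
/- Every skew category of partitions is closed under rotation: if R ⊆ P is a skew category of partitions and p ∈ R(k,l), then every rotation of p belongs to R. -/
attribute [local instance] Classical.propDecidable

noncomputable section

namespace GTQG

/-! ## Partitions -/

/-- The set `P(k,l)` of partitions of `{1,…,k,1',…,l'}`, encoded as equivalence
relations (i.e. set partitions) on the disjoint union `Fin k ⊕ Fin l`. -/
abbrev Part (k l : ℕ) : Type := Setoid (Fin k ⊕ Fin l)

/-- `ker(i,j)`: the partition whose blocks are the fibers of the labelling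
`x ↦ i x` on upper points and `y ↦ j y` on lower points. -/
def kerPartA {α : Type*} {k l : ℕ} (i : Fin k → α) (j : Fin l → α) : Part k l :=
  Setoid.ker (Sum.elim i j)

/-- `ker(i,j)` for `ℕ`-valued multi-indices. -/
abbrev kerPart {k l : ℕ} (i : Fin k → ℕ) (j : Fin l → ℕ) : Part k l := kerPartA i j

/-- `ker(i) = ker(i,∅) ∈ P(k,0)`. -/
def kerPart0 {k : ℕ} (i : Fin k → ℕ) : Part k 0 := kerPartA i Fin.elim0

/-- The pair partition `⊔ ∈ P(0,2)`. -/
def pairPart : Part 0 2 := kerPartA Fin.elim0 (fun _ => (1 : ℕ))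

/-- The identity partition `| ∈ P(1,1)`. -/
def idPart : Part 1 1 := kerPartA (fun _ => (1 : ℕ)) (fun _ => (1 : ℕ))

/-- The partition `p̂ = ker((1,1,2),(2,1,1)) ∈ P(3,3)`. -/
def pHat : Part 3 3 := kerPart ![1, 1, 2] ![2, 1, 1]

/-- The involution `p* ∈ P(l,k)`, turning `p` upside-down. -/
def invol {k l : ℕ} (p : Part k l) : Part l k := Setoid.comap Sum.swap p

/-- The number of blocks of a partition. -/
def blockCount {k l : ℕ} (p : Part k l) : ℕ := Nat.card (Quotient p)

/-- The restriction of `p` to its upper row. -/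
def upperSetoid {k l : ℕ} (p : Part k l) : Setoid (Fin k) := Setoid.comap Sum.inl p

/-- The restriction of `p` to its lower row. -/
def lowerSetoid {k l : ℕ} (p : Part k l) : Setoid (Fin l) := Setoid.comap Sum.inr p

/-- `p ∈ P(k,l)` and `q ∈ P(l,l')` are compatible if the lower row of `p`
and the upper row of `q` have the same block structure
(i.e. `j^(p) ∈ S_∞(i^(q))`). -/
def Compatible {k l l' : ℕ} (p : Part k l) (q : Part l l') : Prop :=
  lowerSetoid p = upperSetoid q

section Comp

variable {k l l' : ℕ}

/-- The points of the vertical concatenation of `p ∈ P(k,l)` and `q ∈ P(l,l')`: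
`k` upper points, `l` middle points, `l'` lower points. -/
abbrev CompCarrier (k l l' : ℕ) : Type := Fin k ⊕ (Fin l ⊕ Fin l')

/-- Inclusion of the points of `p` into the vertical concatenation. -/
def topIncl : Fin k ⊕ Fin l → CompCarrier k l l' := Sum.map id Sum.inl

/-- Inclusion of the points of `q` into the vertical concatenation. -/
def botIncl : Fin l ⊕ Fin l' → CompCarrier k l l' := Sum.inr

/-- Two points of the vertical concatenation are directly connected if they are
connected by a string of `p` or by a string of `q`. -/
def compRel (p : Part k l) (q : Part l l') :
    CompCarrier k l l' → CompCarrier k l l' → Prop := fun x y =>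
  (∃ u v, p u v ∧ x = topIncl u ∧ y = topIncl v) ∨
  (∃ u v, q u v ∧ x = botIncl u ∧ y = botIncl v)

/-- The partition of all points of the vertical concatenation of `p` and `q`
into connected components. -/
def middleJoin (p : Part k l) (q : Part l l') : Setoid (CompCarrier k l l') :=
  Relation.EqvGen.setoid (compRel p q)

/-- The composition `qp ∈ P(k,l')`: vertical concatenation with all loops removed. -/
def compPart (p : Part k l) (q : Part l l') : Part k l' :=
  Setoid.comap (Sum.map id Sum.inr) (middleJoin p q)

/-- A point of the vertical concatenation is a middle point. -/
def IsMiddle (x : CompCarrier k l l') : Prop := ∃ m : Fin l, x = Sum.inr (Sum.inl m)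

/-- The number `l(q,p)` of loops in the vertical concatenation of `p` and `q`:
connected components consisting entirely of middle points. -/
def loopCount (p : Part k l) (q : Part l l') : ℕ :=
  Nat.card {c : Quotient (middleJoin p q) //
    ∀ x : CompCarrier k l l', Quotient.mk (middleJoin p q) x = c → IsMiddle x}

end Comp

/-- The direct sum of two set partitions. -/
def sumSetoid {α β : Type*} (p : Setoid α) (q : Setoid β) : Setoid (α ⊕ β) :=
  Setoid.ker (Sum.map (Quotient.mk p) (Quotient.mk q))

/-- The tensor product `p ⊗ q ∈ P(k+k',l+l')`: horizontal concatenation. -/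
def tensorPart {k l k' l' : ℕ} (p : Part k l) (q : Part k' l') : Part (k + k') (l + l') :=
  Setoid.comap
    (Sum.elim
      (fun z => Fin.addCases (fun a => Sum.inl (Sum.inl a)) (fun b => Sum.inr (Sum.inl b)) z)
      (fun z => Fin.addCases (fun a => Sum.inl (Sum.inr a)) (fun b => Sum.inr (Sum.inr b)) z))
    (sumSetoid p q)

/-! ## Rotations -/

/-- Rotating the outermost left upper leg to the lower row (reindexing map). -/
def rotULDmap (k l : ℕ) : Fin k ⊕ Fin (l + 1) → Fin (k + 1) ⊕ Fin l
  | .inl x => .inl x.succ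
  | .inr y => Fin.cases (Sum.inl 0) (fun i => Sum.inr i) y

/-- Rotating the outermost left upper leg to the lower row. -/
def rotULD {k l : ℕ} (p : Part (k + 1) l) : Part k (l + 1) :=
  Setoid.comap (rotULDmap k l) p

/-- Rotating the outermost left lower leg to the upper row (reindexing map). -/
def rotDLUmap (k l : ℕ) : Fin (k + 1) ⊕ Fin l → Fin k ⊕ Fin (l + 1)
  | .inl x => Fin.cases (Sum.inr 0) (fun i => Sum.inl i) x
  | .inr y => .inr y.succ

/-- Rotating the outermost left lower leg to the upper row. -/
def rotDLU {k l : ℕ} (p : Part k (l + 1)) : Part (k + 1) l :=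
  Setoid.comap (rotDLUmap k l) p

/-- Rotating the outermost right upper leg to the lower row (reindexing map). -/
def rotURDmap (k l : ℕ) : Fin k ⊕ Fin (l + 1) → Fin (k + 1) ⊕ Fin l
  | .inl x => .inl x.castSucc
  | .inr y => Fin.lastCases (Sum.inl (Fin.last k)) (fun i => Sum.inr i) y

/-- Rotating the outermost right upper leg to the lower row. -/
def rotURD {k l : ℕ} (p : Part (k + 1) l) : Part k (l + 1) :=
  Setoid.comap (rotURDmap k l) p

/-- Rotating the outermost right lower leg to the upper row (reindexing map). -/
def rotDRUmap (k l : ℕ) : Fin (k + 1) ⊕ Fin l → Fin k ⊕ Fin (l + 1)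
  | .inl x => Fin.lastCases (Sum.inr (Fin.last l)) (fun i => Sum.inl i) x
  | .inr y => .inr y.castSucc

/-- Rotating the outermost right lower leg to the upper row. -/
def rotDRU {k l : ℕ} (p : Part k (l + 1)) : Part (k + 1) l :=
  Setoid.comap (rotDRUmap k l) p

/-- One basic rotation step between partitions (with varying numbers of
upper and lower points). -/
inductive BasicRot : (Σ k l : ℕ, Part k l) → (Σ k l : ℕ, Part k l) → Prop
  | uld {k l : ℕ} (p : Part (k + 1) l) : BasicRot ⟨k + 1, l, p⟩ ⟨k, l + 1, rotULD p⟩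
  | dlu {k l : ℕ} (p : Part k (l + 1)) : BasicRot ⟨k, l + 1, p⟩ ⟨k + 1, l, rotDLU p⟩
  | urd {k l : ℕ} (p : Part (k + 1) l) : BasicRot ⟨k + 1, l, p⟩ ⟨k, l + 1, rotURD p⟩
  | dru {k l : ℕ} (p : Part k (l + 1)) : BasicRot ⟨k, l + 1, p⟩ ⟨k + 1, l, rotDRU p⟩

/-- `IsRotationOf q p`: `q` is obtained from `p` by finitely many basic rotations. -/
def IsRotationOf (q p : Σ k l : ℕ, Part k l) : Prop := Relation.ReflTransGen BasicRot p q

/-- A family `R ⊆ P` is closed under rotation. -/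
def RotationClosed (R : ∀ k l : ℕ, Set (Part k l)) : Prop :=
  ∀ {k l k' l' : ℕ} (p : Part k l) (q : Part k' l'),
    p ∈ R k l → IsRotationOf ⟨k', l', q⟩ ⟨k, l, p⟩ → q ∈ R k' l'

/-! ## (Skew) categories of partitions -/

/-- A skew category of partitions: a collection `R ⊆ P` containing `⊔` and `|`,
closed under involution, connected tensor products and conditioned composition. -/
structure IsSkewCategory (R : ∀ k l : ℕ, Set (Part k l)) : Prop where
  pair_mem : pairPart ∈ R 0 2
  id_mem : idPart ∈ R 1 1
  invol_mem : ∀ {k l : ℕ} {p : Part k l}, p ∈ R k l → invol p ∈ R l k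
  conn_tensor_mem : ∀ {k l k' l' : ℕ} {p : Part k l} {q : Part k' l'}
      (i : Fin k → ℕ) (j : Fin l → ℕ) (f : Fin k' → ℕ) (g : Fin l' → ℕ),
      p ∈ R k l → q ∈ R k' l' → kerPart i j = p → kerPart f g = q →
      kerPart (Fin.append i f) (Fin.append j g) ∈ R (k + k') (l + l')
  cond_comp_mem : ∀ {k l l' : ℕ} {p : Part k l} {q : Part l l'},
      p ∈ R k l → q ∈ R l l' → Compatible p q → compPart p q ∈ R k l'

/-- A category of partitions: a collection `C ⊆ P` containing `⊔` and `|`,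
closed under involution, tensor products and composition. -/
structure IsCategoryOfPartitions (C : ∀ k l : ℕ, Set (Part k l)) : Prop where
  pair_mem : pairPart ∈ C 0 2
  id_mem : idPart ∈ C 1 1
  invol_mem : ∀ {k l : ℕ} {p : Part k l}, p ∈ C k l → invol p ∈ C l k
  tensor_mem : ∀ {k l k' l' : ℕ} {p : Part k l} {q : Part k' l'},
      p ∈ C k l → q ∈ C k' l' → tensorPart p q ∈ C (k + k') (l + l')
  comp_mem : ∀ {k l l' : ℕ} {p : Part k l} {q : Part l l'},
      p ∈ C k l → q ∈ C l l' → compPart p q ∈ C k l'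

/-- The skew category of partitions generated by a family `E`. -/
def skewGenerated (E : ∀ k l : ℕ, Set (Part k l)) : ∀ k l : ℕ, Set (Part k l) :=
  fun k l => { p | ∀ R : ∀ k l : ℕ, Set (Part k l),
    IsSkewCategory R → (∀ k' l' : ℕ, E k' l' ⊆ R k' l') → p ∈ R k l }

/-- The category of partitions generated by a family `E`. -/
def catGenerated (E : ∀ k l : ℕ, Set (Part k l)) : ∀ k l : ℕ, Set (Part k l) :=
  fun k l => { p | ∀ C : ∀ k l : ℕ, Set (Part k l),
    IsCategoryOfPartitions C → (∀ k' l' : ℕ, E k' l' ⊆ C k' l') → p ∈ C k l }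

end GTQG
namespace GTQG

/-! ## The free products `ℤ₂^{*∞}` and `ℤ₂^{*n}` -/

/-- The cyclic group of order two (written multiplicatively). -/
abbrev Z2 : Type := Multiplicative (ZMod 2)

/-- `ℤ₂^{*∞}`, the free product of countably many copies of `ℤ₂`. -/
abbrev FreeZ2 : Type := Monoid.CoprodI (fun _ : ℕ => Z2)

/-- `ℤ₂^{*n}`, the free product of `n` copies of `ℤ₂`. -/
abbrev FreeZ2n (n : ℕ) : Type := Monoid.CoprodI (fun _ : Fin n => Z2)

/-- The generator `a_i` of `ℤ₂^{*∞}`. -/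
def gen (i : ℕ) : FreeZ2 := Monoid.CoprodI.of (i := i) (Multiplicative.ofAdd (1 : ZMod 2))

/-- The generator `a_i` of `ℤ₂^{*n}`. -/
def genn {n : ℕ} (i : Fin n) : FreeZ2n n :=
  Monoid.CoprodI.of (i := i) (Multiplicative.ofAdd (1 : ZMod 2))

/-- The word `a_i = a_{i₁} ⋯ a_{i_k} ∈ ℤ₂^{*∞}` associated to a multi-index. -/
def aWord {k : ℕ} (i : Fin k → ℕ) : FreeZ2 := (List.ofFn fun x => gen (i x)).prod

/-- The word `a_i = a_{i₁} ⋯ a_{i_k} ∈ ℤ₂^{*n}` associated to a multi-index. -/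
def aWordn {n k : ℕ} (i : Fin k → Fin n) : FreeZ2n n := (List.ofFn fun x => genn (i x)).prod

/-- The natural embedding `ℤ₂^{*n} → ℤ₂^{*∞}`. -/
def incl (n : ℕ) : FreeZ2n n →* FreeZ2 :=
  Monoid.CoprodI.lift (fun i => Monoid.CoprodI.of (M := fun _ : ℕ => Z2) (i := (i : ℕ)))

/-- The endomorphism of `ℤ₂^{*∞}` induced by a map `σ : ℕ → ℕ`, `a_i ↦ a_{σ i}`.
For bijective `σ` this is the action of `S_∞`, in general that of `sS_∞`. -/
def permEndo (σ : ℕ → ℕ) : FreeZ2 →* FreeZ2 :=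
  Monoid.CoprodI.lift (fun i => Monoid.CoprodI.of (M := fun _ : ℕ => Z2) (i := σ i))

/-- The endomorphism of `ℤ₂^{*n}` induced by a map `σ : Fin n → Fin n`. -/
def permEndon {n : ℕ} (σ : Fin n → Fin n) : FreeZ2n n →* FreeZ2n n :=
  Monoid.CoprodI.lift (fun i => Monoid.CoprodI.of (M := fun _ : Fin n => Z2) (i := σ i))

/-- A map `ℕ → ℕ` is finitely supported (moves only finitely many points). -/
def FinitelySupported (σ : ℕ → ℕ) : Prop := {x | σ x ≠ x}.Finite

/-- `F_∞(D) = S_∞({a_{ind(p)} : p ∈ D(k,0)})`, the set of all words `a_i` with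
`ker(i) ∈ D(k,0)` (the `S_∞`-orbit of the words of minimal-index labellings). -/
def Finfty (D : ∀ k l : ℕ, Set (Part k l)) : Set FreeZ2 :=
  { g | ∃ (k : ℕ) (i : Fin k → ℕ), kerPart0 i ∈ D k 0 ∧ g = aWord i }

end GTQG
namespace GTQG

/-! ## The maps `T̂_p` and `T_p` -/

/-- `(ℂ^n)^{⊗k}`, realised as functions on multi-indices (the standard basis
`e_{i₁} ⊗ ⋯ ⊗ e_{i_k}` is indexed by multi-indices `i ∈ {1,…,n}^k`). -/
abbrev MV (n k : ℕ) : Type := (Fin k → Fin n) → ℂ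

/-- `δ̂_p(i,j) = 1` iff `(i,j) ∈ S_∞(ind(p))`, i.e. iff `ker(i,j) = p`. -/
def hatDelta {k l : ℕ} (p : Part k l) {n : ℕ} (i : Fin k → Fin n) (j : Fin l → Fin n) : ℂ :=
  if kerPartA i j = p then 1 else 0

/-- `δ_p(i,j) = 1` iff `(i,j) ∈ sS_∞(ind(p))`, i.e. iff the labelling `(i,j)`
is constant on the blocks of `p`. -/
def softDelta {k l : ℕ} (p : Part k l) {n : ℕ} (i : Fin k → Fin n) (j : Fin l → Fin n) : ℂ :=
  if p ≤ kerPartA i j then 1 else 0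

/-- The linear map `T̂_p^(n) : (ℂ^n)^{⊗k} → (ℂ^n)^{⊗l}`. -/
def hatT (n : ℕ) {k l : ℕ} (p : Part k l) : MV n k →ₗ[ℂ] MV n l :=
  Matrix.mulVecLin (Matrix.of fun (j : Fin l → Fin n) (i : Fin k → Fin n) => hatDelta p i j)

/-- The linear map `T_p^(n) : (ℂ^n)^{⊗k} → (ℂ^n)^{⊗l}` of Banica–Speicher. -/
def softT (n : ℕ) {k l : ℕ} (p : Part k l) : MV n k →ₗ[ℂ] MV n l :=
  Matrix.mulVecLin (Matrix.of fun (j : Fin l → Fin n) (i : Fin k → Fin n) => softDelta p i j)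

/-- The tensor product of linear maps, under the identification
`(ℂ^n)^{⊗k} ⊗ (ℂ^n)^{⊗k'} ≅ (ℂ^n)^{⊗(k+k')}` of basis vectors
`(e_{i} ⊗ e_{f} ↦ e_{if}`, concatenation of multi-indices). -/
def tensorMap {n k l k' l' : ℕ} (S : MV n k →ₗ[ℂ] MV n l) (T : MV n k' →ₗ[ℂ] MV n l') :
    MV n (k + k') →ₗ[ℂ] MV n (l + l') :=
  Matrix.mulVecLin (Matrix.of fun (x : Fin (l + l') → Fin n) (y : Fin (k + k') → Fin n) =>
    LinearMap.toMatrix' S (fun a => x (Fin.castAdd l' a)) (fun a => y (Fin.castAdd k' a)) *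
    LinearMap.toMatrix' T (fun b => x (Fin.natAdd l b)) (fun b => y (Fin.natAdd k b)))

/-- The adjoint of a linear map `(ℂ^n)^{⊗k} → (ℂ^n)^{⊗l}` with respect to the
standard Hermitian inner products (conjugate-transpose of the matrix in the
standard bases). -/
def adjointMap {n k l : ℕ} (S : MV n k →ₗ[ℂ] MV n l) : MV n l →ₗ[ℂ] MV n k :=
  Matrix.mulVecLin (LinearMap.toMatrix' S).conjTranspose

/-- The map `ζ : ℂ → (ℂ^n)^{⊗2}`, `1 ↦ Σᵢ eᵢ ⊗ eᵢ`. -/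
def zetaMap (n : ℕ) : MV n 0 →ₗ[ℂ] MV n 2 :=
  Matrix.mulVecLin (Matrix.of fun (j : Fin 2 → Fin n) (_ : Fin 0 → Fin n) =>
    if j 0 = j 1 then (1 : ℂ) else 0)

/-- A tensor category with duals (of subspaces of `Hom((ℂ^n)^{⊗k}, (ℂ^n)^{⊗l})`). -/
structure IsTensorCategoryWithDuals (n : ℕ)
    (H : ∀ k l : ℕ, Submodule ℂ (MV n k →ₗ[ℂ] MV n l)) : Prop where
  tensor_mem : ∀ {k l k' l' : ℕ} (S : MV n k →ₗ[ℂ] MV n l) (T : MV n k' →ₗ[ℂ] MV n l'),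
      S ∈ H k l → T ∈ H k' l' → tensorMap S T ∈ H (k + k') (l + l')
  comp_mem : ∀ {k l l' : ℕ} (S : MV n k →ₗ[ℂ] MV n l) (T : MV n l →ₗ[ℂ] MV n l'),
      S ∈ H k l → T ∈ H l l' → T ∘ₗ S ∈ H k l'
  adjoint_mem : ∀ {k l : ℕ} (S : MV n k →ₗ[ℂ] MV n l), S ∈ H k l → adjointMap S ∈ H l k
  id_mem : LinearMap.id ∈ H 1 1
  zeta_mem : zetaMap n ∈ H 0 2

/-- The collection of subspaces `span{T̂_p^(n) : p ∈ R(k,l)}`. -/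
def spanOf (n : ℕ) (R : ∀ k l : ℕ, Set (Part k l)) :
    ∀ k l : ℕ, Submodule ℂ (MV n k →ₗ[ℂ] MV n l) :=
  fun k l => Submodule.span ℂ {T | ∃ p ∈ R k l, T = hatT n p}

/-- All connected tensor products of `p` and `q`. -/
def connTensorSet {k l k' l' : ℕ} (p : Part k l) (q : Part k' l') :
    Set (Part (k + k') (l + l')) :=
  { r | ∃ (i : Fin k → ℕ) (j : Fin l → ℕ) (f : Fin k' → ℕ) (g : Fin l' → ℕ),
      kerPart i j = p ∧ kerPart f g = q ∧ r = kerPart (Fin.append i f) (Fin.append j g) }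

/-- All connected conditioned compositions of `p` and `q`. -/
def connCompSet {k l l' : ℕ} (p : Part k l) (q : Part l l') : Set (Part k l') :=
  { r | ∃ (i : Fin k → ℕ) (h : Fin l → ℕ) (g : Fin l' → ℕ),
      kerPart i h = p ∧ kerPart h g = q ∧ r = kerPart i g }

end GTQG
/-! Write `p = ker(snoc m c, j)`. Bending the last upper point of `p` down is the composition
of `ker(m, m) ⊗ ⊔` (on top) with `p ⊗ |`, both tensor products being connected by giving the
pair and the through-string the label `c`. The two middle rows then carry the same labels
`snoc (snoc m c) c`, so the composition is conditioned, and since every label of `m` occurs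
there it equals `ker(m, snoc j c)`. Bending the first upper point down works the same way on
the left, and lower points are moved up by conjugating with the involution. -/

theorem Fin.append_const_two_eq_snoc_snoc {α : Type*} {l : ℕ} (j : Fin l → α) (c : α) :
    Fin.append j (fun _ : Fin 2 => c) = Fin.snoc (Fin.snoc j c) c := by
  ext x
  refine Fin.addCases (fun x => ?_) (fun y => ?_) x
  · rw [Fin.append_left, show Fin.castAdd 2 x = x.castSucc.castSucc from rfl,
      Fin.snoc_castSucc, Fin.snoc_castSucc]
  · rw [Fin.append_right]
    fin_cases y
    · show c = (Fin.snoc (Fin.snoc j c) c : Fin (l + 2) → α) (Fin.last l).castSucc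
      simp
    · show c = (Fin.snoc (Fin.snoc j c) c : Fin (l + 2) → α) (Fin.last (l + 1))
      simp

theorem Fin.const_two_append_eq_cons_cons {α : Type*} {l : ℕ} (c : α) (j : Fin l → α) :
    Fin.append (fun _ : Fin 2 => c) j = Fin.cons c (Fin.cons c j) ∘ Fin.cast (by omega) := by
  ext x
  refine Fin.addCases (fun x => ?_) (fun y => ?_) x
  · fin_cases x <;> rfl
  · rw [Fin.append_right, Function.comp_apply,
      show Fin.cast _ (Fin.natAdd 2 y) = y.succ.succ from Fin.ext (by simp)]
    rfl

namespace GTQG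

lemma comap_kerPart {k l k' l' : ℕ} (f : Fin k' ⊕ Fin l' → Fin k ⊕ Fin l) {i : Fin k → ℕ}
    {j : Fin l → ℕ} {i' : Fin k' → ℕ} {j' : Fin l' → ℕ} (h : Sum.elim i j ∘ f = Sum.elim i' j') :
    Setoid.comap f (kerPart i j) = kerPart i' j' :=
  Setoid.ext fun a b => by
    change Sum.elim i j (f a) = Sum.elim i j (f b) ↔ Sum.elim i' j' a = Sum.elim i' j' b
    rw [← h]; rfl

lemma exists_kerPart {k l : ℕ} (p : Part k l) : ∃ i j, kerPart i j = p := by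
  obtain ⟨f, hf⟩ := exists_injective_nat (Quotient p)
  refine ⟨f ∘ Quotient.mk p ∘ Sum.inl, f ∘ Quotient.mk p ∘ Sum.inr, Setoid.ext fun a b => ?_⟩
  rw [← Quotient.eq (r := p), ← hf.eq_iff]
  cases a <;> cases b <;> rfl

lemma exists_kerPart_snoc {k l : ℕ} (p : Part (k + 1) l) :
    ∃ m c j, kerPart (Fin.snoc m c : Fin (k + 1) → ℕ) j = p := by
  obtain ⟨i, j, rfl⟩ := exists_kerPart p
  exact ⟨Fin.init i, i (Fin.last k), j, by rw [Fin.snoc_init_self]⟩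

lemma exists_kerPart_cons {k l : ℕ} (p : Part (k + 1) l) :
    ∃ c m j, kerPart (Fin.cons c m : Fin (k + 1) → ℕ) j = p := by
  obtain ⟨i, j, rfl⟩ := exists_kerPart p
  exact ⟨i 0, Fin.tail i, j, by rw [Fin.cons_self_tail]⟩

lemma kerPart_mem_of_cast {R : ∀ k l : ℕ, Set (Part k l)} {k l k' l' : ℕ} (hk : k = k')
    (hl : l = l') {i : Fin k' → ℕ} {j : Fin l' → ℕ}
    (h : kerPart (i ∘ Fin.cast hk) (j ∘ Fin.cast hl) ∈ R k l) : kerPart i j ∈ R k' l' := by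
  subst hk hl; exact h

lemma kerPart_const_eq_idPart (c : ℕ) : kerPart (fun _ : Fin 1 => c) (fun _ => c) = idPart :=
  Setoid.ext fun a b => by cases a <;> cases b <;> exact iff_of_true rfl rfl

lemma kerPart_const_eq_pairPart (c : ℕ) : kerPart Fin.elim0 (fun _ : Fin 2 => c) = pairPart :=
  Setoid.ext fun a b => by
    rcases a with a | _
    · exact a.elim0
    rcases b with b | _
    · exact b.elim0
    exact iff_of_true rfl rfl

lemma compatible_kerPart {k l l' : ℕ} (u : Fin k → ℕ) (h : Fin l → ℕ) (g : Fin l' → ℕ) :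
    Compatible (kerPart u h) (kerPart h g) :=
  Setoid.ext fun _ _ => Iff.rfl

lemma compPart_kerPart {k l l' : ℕ} (u : Fin k → ℕ) (h : Fin l → ℕ) (g : Fin l' → ℕ)
    (hcov : Set.range u ⊆ Set.range h) :
    compPart (kerPart u h) (kerPart h g) = kerPart u g := by
  set J := middleJoin (kerPart u h) (kerPart h g)
  have top : ∀ a b, Sum.elim u h a = Sum.elim u h b → J (topIncl a) (topIncl b) :=
    fun a b hab => Relation.EqvGen.rel _ _ (Or.inl ⟨a, b, hab, rfl, rfl⟩)
  have bot : ∀ a b, Sum.elim h g a = Sum.elim h g b → J (botIncl a) (botIncl b) :=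
    fun a b hab => Relation.EqvGen.rel _ _ (Or.inr ⟨a, b, hab, rfl, rfl⟩)
  refine Setoid.ext fun a b => ⟨fun hab => ?_, fun hab => ?_⟩
  · have hJ : J ≤ Setoid.ker (Sum.elim u (Sum.elim h g)) := by
      refine Setoid.eqvGen_le ?_
      rintro _ _ (⟨a, b, hab, rfl, rfl⟩ | ⟨a, b, hab, rfl, rfl⟩)
      · cases a <;> cases b <;> exact hab
      · exact hab
    have := hJ hab
    cases a <;> cases b <;> exact this
  · have cross : ∀ x z, u x = g z → J (.inl x) (.inr (.inr z)) := by
      intro x z hxz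
      obtain ⟨y, hy⟩ := hcov ⟨x, rfl⟩
      exact J.trans' (top (.inl x) (.inr y) hy.symm) (bot (.inl y) (.inr z) (hy.trans hxz))
    rcases a with x | z <;> rcases b with x' | z'
    · exact top (.inl x) (.inl x') hab
    · exact cross x z' hab
    · exact J.symm' (cross x' z hab.symm)
    · exact bot (.inr z) (.inr z') hab

lemma rotURD_kerPart_snoc {k l : ℕ} (m : Fin k → ℕ) (c : ℕ) (j : Fin l → ℕ) :
    rotURD (kerPart (Fin.snoc m c : Fin (k + 1) → ℕ) j) = kerPart m (Fin.snoc j c) := by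
  refine comap_kerPart _ (funext ?_)
  rintro (x | y)
  · simp [rotURDmap]
  · induction y using Fin.lastCases <;> simp [rotURDmap]

lemma rotULD_kerPart_cons {k l : ℕ} (c : ℕ) (m : Fin k → ℕ) (j : Fin l → ℕ) :
    rotULD (kerPart (Fin.cons c m : Fin (k + 1) → ℕ) j) = kerPart m (Fin.cons c j) := by
  refine comap_kerPart _ (funext ?_)
  rintro (x | y)
  · simp [rotULDmap]
  · induction y using Fin.cases <;> simp [rotULDmap]

lemma rotDRU_eq_invol_rotURD_invol {k l : ℕ} (p : Part k (l + 1)) :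
    rotDRU p = invol (rotURD (invol p)) := by
  have h : rotDRUmap k l = Sum.swap ∘ rotURDmap l k ∘ Sum.swap := by
    funext a
    rcases a with x | y
    · induction x using Fin.lastCases <;> simp [rotURDmap, rotDRUmap]
    · simp [rotURDmap, rotDRUmap]
  rw [rotDRU, h]
  rfl

lemma rotDLU_eq_invol_rotULD_invol {k l : ℕ} (p : Part k (l + 1)) :
    rotDLU p = invol (rotULD (invol p)) := by
  have h : rotDLUmap k l = Sum.swap ∘ rotULDmap l k ∘ Sum.swap := by
    funext a
    rcases a with x | y
    · induction x using Fin.cases <;> simp [rotULDmap, rotDLUmap]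
    · simp [rotULDmap, rotDLUmap]
  rw [rotDLU, h]
  rfl

namespace IsSkewCategory

variable {R : ∀ k l : ℕ, Set (Part k l)} (hR : IsSkewCategory R)
include hR

lemma mem_zero_zero (p : Part 0 0) : p ∈ R 0 0 := by
  have h := hR.cond_comp_mem hR.pair_mem (hR.invol_mem hR.pair_mem)
    (Setoid.ext fun _ _ => Iff.rfl)
  rwa [show compPart pairPart (invol pairPart) = p from Setoid.ext fun a => isEmptyElim a] at h

lemma kerPart_comp_mem {k l l' : ℕ} {u : Fin k → ℕ} {h : Fin l → ℕ} {g : Fin l' → ℕ}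
    (huh : kerPart u h ∈ R k l) (hhg : kerPart h g ∈ R l l')
    (hcov : Set.range u ⊆ Set.range h) : kerPart u g ∈ R k l' := by
  simpa only [compPart_kerPart u h g hcov] using
    hR.cond_comp_mem huh hhg (compatible_kerPart u h g)

lemma kerPart_snoc_mem {k l : ℕ} {i : Fin k → ℕ} {j : Fin l → ℕ} (hij : kerPart i j ∈ R k l)
    (c : ℕ) : kerPart (Fin.snoc i c : Fin (k + 1) → ℕ) (Fin.snoc j c) ∈ R (k + 1) (l + 1) := by
  simpa only [Fin.append_right_eq_snoc] using
    hR.conn_tensor_mem i j (fun _ => c) (fun _ => c) hij hR.id_mem rfl (kerPart_const_eq_idPart c)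

lemma kerPart_cons_mem {k l : ℕ} {i : Fin k → ℕ} {j : Fin l → ℕ} (hij : kerPart i j ∈ R k l)
    (c : ℕ) : kerPart (Fin.cons c i : Fin (k + 1) → ℕ) (Fin.cons c j) ∈ R (k + 1) (l + 1) := by
  refine kerPart_mem_of_cast (Nat.add_comm 1 k) (Nat.add_comm 1 l) ?_
  simpa only [Fin.append_left_eq_cons] using
    hR.conn_tensor_mem (fun _ => c) (fun _ => c) i j hR.id_mem hij (kerPart_const_eq_idPart c) rfl

lemma kerPart_snoc_snoc_mem {k l : ℕ} {i : Fin k → ℕ} {j : Fin l → ℕ}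
    (hij : kerPart i j ∈ R k l) (c : ℕ) :
    kerPart i (Fin.snoc (Fin.snoc j c) c : Fin (l + 2) → ℕ) ∈ R k (l + 2) := by
  refine kerPart_mem_of_cast (Nat.add_zero k) rfl ?_
  simpa only [Fin.append_const_two_eq_snoc_snoc, Fin.append_elim0, Fin.cast_refl,
    Function.comp_id] using
    hR.conn_tensor_mem i j Fin.elim0 (fun _ => c) hij hR.pair_mem rfl (kerPart_const_eq_pairPart c)

lemma kerPart_cons_cons_mem {k l : ℕ} {i : Fin k → ℕ} {j : Fin l → ℕ}
    (hij : kerPart i j ∈ R k l) (c : ℕ) :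
    kerPart i (Fin.cons c (Fin.cons c j) : Fin (l + 2) → ℕ) ∈ R k (l + 2) := by
  refine kerPart_mem_of_cast (Nat.zero_add k) (Nat.add_comm 2 l) ?_
  simpa only [Fin.const_two_append_eq_cons_cons, Fin.elim0_append] using
    hR.conn_tensor_mem Fin.elim0 (fun _ => c) i j hR.pair_mem hij (kerPart_const_eq_pairPart c) rfl

lemma kerPart_self_mem {k : ℕ} (m : Fin k → ℕ) : kerPart m m ∈ R k k := by
  induction k with
  | zero => exact hR.mem_zero_zero _
  | succ k ih =>
    simpa only [Fin.snoc_init_self] using hR.kerPart_snoc_mem (ih (Fin.init m)) (m (Fin.last k))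

lemma rotURD_mem {k l : ℕ} {p : Part (k + 1) l} (hp : p ∈ R (k + 1) l) :
    rotURD p ∈ R k (l + 1) := by
  obtain ⟨m, c, j, rfl⟩ := exists_kerPart_snoc p
  rw [rotURD_kerPart_snoc]
  refine hR.kerPart_comp_mem (hR.kerPart_snoc_snoc_mem (hR.kerPart_self_mem m) c)
    (hR.kerPart_snoc_mem hp c) ?_
  rintro _ ⟨x, rfl⟩
  exact ⟨x.castSucc.castSucc, by simp⟩

lemma rotULD_mem {k l : ℕ} {p : Part (k + 1) l} (hp : p ∈ R (k + 1) l) :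
    rotULD p ∈ R k (l + 1) := by
  obtain ⟨c, m, j, rfl⟩ := exists_kerPart_cons p
  rw [rotULD_kerPart_cons]
  refine hR.kerPart_comp_mem (hR.kerPart_cons_cons_mem (hR.kerPart_self_mem m) c)
    (hR.kerPart_cons_mem hp c) ?_
  rintro _ ⟨x, rfl⟩
  exact ⟨x.succ.succ, by simp⟩

lemma rotDRU_mem {k l : ℕ} {p : Part k (l + 1)} (hp : p ∈ R k (l + 1)) :
    rotDRU p ∈ R (k + 1) l := by
  rw [rotDRU_eq_invol_rotURD_invol]
  exact hR.invol_mem (hR.rotURD_mem (hR.invol_mem hp))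

lemma rotDLU_mem {k l : ℕ} {p : Part k (l + 1)} (hp : p ∈ R k (l + 1)) :
    rotDLU p ∈ R (k + 1) l := by
  rw [rotDLU_eq_invol_rotULD_invol]
  exact hR.invol_mem (hR.rotULD_mem (hR.invol_mem hp))

lemma mem_of_basicRot {s t : Σ k l : ℕ, Part k l} (hst : BasicRot s t)
    (hs : s.2.2 ∈ R s.1 s.2.1) : t.2.2 ∈ R t.1 t.2.1 := by
  cases hst with
  | uld _ => exact hR.rotULD_mem hs
  | dlu _ => exact hR.rotDLU_mem hs
  | urd _ => exact hR.rotURD_mem hs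
  | dru _ => exact hR.rotDRU_mem hs

end IsSkewCategory

/-- Every skew category of partitions is closed under rotation. -/
theorem skewCategory_rotationClosed (R : ∀ k l : ℕ, Set (Part k l))
    (hR : IsSkewCategory R) : RotationClosed R := by
  intro k l k' l' p q hp hpq
  suffices ∀ t, Relation.ReflTransGen BasicRot ⟨k, l, p⟩ t → t.2.2 ∈ R t.1 t.2.1 from
    this _ hpq
  intro t ht
  induction ht with
  | refl => exact hp
  | tail _ hst ih => exact hR.mem_of_basicRot hst ih

end GTQG
end
end

section
/- Every skew category of partitions is closed under connected conditioned composition: if R is a skew category of partitions, p ∈ R(k,l) and q ∈ R(l,l') are compatible, and (i,j) ∈ S_∞(ind(p)), (j,g) ∈ S_∞(ind(q)), then the connected conditioned composition q ·_{(i,j,g)} p = ker(i,g) ∈ P(k,l') belongs to R. -/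
attribute [local instance] Classical.propDecidable

noncomputable section

namespace GTQG


section StatementOneAux

/-- Two labellings with the same kernel give the same `kerPartA`. -/
theorem kerPartA_ext {α β : Type*} {k l : ℕ} {i : Fin k → α} {j : Fin l → α}
    {i' : Fin k → β} {j' : Fin l → β}
    (h : ∀ x y, Sum.elim i j x = Sum.elim i j y ↔ Sum.elim i' j' x = Sum.elim i' j' y) :
    kerPartA i j = kerPartA i' j' :=
  Setoid.ext h

theorem invol_kerPartA {k l : ℕ} (a : Fin k → ℕ) (b : Fin l → ℕ) :
    invol (kerPartA a b) = kerPartA b a := by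
  apply Setoid.ext
  intro x y
  cases x <;> cases y <;> exact Iff.rfl

theorem kerPartA_const_pair (c : ℕ) :
    kerPartA Fin.elim0 (fun _ : Fin 2 => c) = pairPart := by
  apply Setoid.ext
  intro x y
  rcases x with x | x
  · exact x.elim0
  rcases y with y | y
  · exact y.elim0
  · constructor <;> intro _ <;> rfl

instance : Subsingleton (Part 0 0) := by
  constructor
  intro s t
  apply Setoid.ext
  intro a
  rcases a with a | a <;> exact a.elim0

theorem compatible_kerPartA {k m l' : ℕ} (i : Fin k → ℕ) (M : Fin m → ℕ) (g : Fin l' → ℕ) :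
    Compatible (kerPartA i M) (kerPartA M g) := by
  apply Setoid.ext
  intro a b
  exact Iff.rfl

/-- The key combinatorial fact: if the middle labelling `M` covers all labels of `i`,
then the composition of the two kernels is the kernel `ker(i,g)`. -/
theorem compPart_kerPart_s1 {k m l' : ℕ} (i : Fin k → ℕ) (M : Fin m → ℕ) (g : Fin l' → ℕ)
    (hrange : ∀ x, ∃ t, M t = i x) :
    compPart (kerPartA i M) (kerPartA M g) = kerPartA i g := by
  set S : Part k m := kerPartA i M with hS
  set U : Part m l' := kerPartA M g with hU
  set L : CompCarrier k m l' → ℕ := Sum.elim i (Sum.elim M g) with hL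
  have lab : ∀ a b, Relation.EqvGen (compRel S U) a b → L a = L b := by
    intro a b h
    induction h with
    | rel x y hxy =>
      rcases hxy with ⟨u, v, huv, hx, hy⟩ | ⟨u, v, huv, hx, hy⟩
      · subst hx; subst hy
        have h' : Sum.elim i M u = Sum.elim i M v := huv
        cases u <;> cases v <;> exact h'
      · subst hx; subst hy
        have h' : Sum.elim M g u = Sum.elim M g v := huv
        cases u <;> cases v <;> exact h'
    | refl x => rfl
    | symm x y _ ih => exact ih.symm
    | trans x y z _ _ ih1 ih2 => exact ih1.trans ih2
  have bridge : ∀ (a : CompCarrier k m l') (μ : Fin m), L a = M μ →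
      Relation.EqvGen (compRel S U) a (Sum.inr (Sum.inl μ)) := by
    intro a μ h
    rcases a with t | (ν | b)
    · refine Relation.EqvGen.rel _ _ (Or.inl ⟨Sum.inl t, Sum.inr μ, ?_, rfl, rfl⟩)
      exact (h : Sum.elim i M (Sum.inl t) = Sum.elim i M (Sum.inr μ))
    · refine Relation.EqvGen.rel _ _ (Or.inr ⟨Sum.inl ν, Sum.inl μ, ?_, rfl, rfl⟩)
      exact (h : Sum.elim M g (Sum.inl ν) = Sum.elim M g (Sum.inl μ))
    · refine Relation.EqvGen.rel _ _ (Or.inr ⟨Sum.inr b, Sum.inl μ, ?_, rfl, rfl⟩)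
      exact (h : Sum.elim M g (Sum.inr b) = Sum.elim M g (Sum.inl μ))
  apply Setoid.ext
  intro x y
  constructor
  · intro h
    have h' : Relation.EqvGen (compRel S U)
        (Sum.map id Sum.inr x) (Sum.map id Sum.inr y) := h
    have := lab _ _ h'
    cases x <;> cases y <;> exact this
  · intro h
    show Relation.EqvGen (compRel S U) (Sum.map id Sum.inr x) (Sum.map id Sum.inr y)
    rcases x with a | b <;> rcases y with a' | b'
    · refine Relation.EqvGen.rel _ _ (Or.inl ⟨Sum.inl a, Sum.inl a', ?_, rfl, rfl⟩)
      exact (h : i a = i a')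
    · obtain ⟨t, ht⟩ := hrange a
      have h1 := bridge (Sum.inl a) t ht.symm
      have h2 := bridge (Sum.inr (Sum.inr b')) t (by
        show g b' = M t
        rw [ht]
        exact (h : i a = g b').symm)
      exact Relation.EqvGen.trans _ _ _ h1 (Relation.EqvGen.symm _ _ h2)
    · obtain ⟨t, ht⟩ := hrange a'
      have h1 := bridge (Sum.inr (Sum.inr b)) t (by
        show g b = M t
        rw [ht]
        exact (h : g b = i a'))
      have h2 := bridge (Sum.inl a') t ht.symm
      exact Relation.EqvGen.trans _ _ _ h1 (Relation.EqvGen.symm _ _ h2)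
    · refine Relation.EqvGen.rel _ _ (Or.inr ⟨Sum.inr b, Sum.inr b', ?_, rfl, rfl⟩)
      exact (h : g b = g b')

/-- From cups (with arbitrary labels), every skew category contains a one-row
partition whose labels cover any prescribed multi-index. -/
theorem cups_mem (R : ∀ k l : ℕ, Set (Part k l)) (hR : IsSkewCategory R) :
    ∀ (k : ℕ) (i : Fin k → ℕ), ∃ (m : ℕ) (w : Fin m → ℕ),
      kerPart Fin.elim0 w ∈ R 0 m ∧ ∀ x, ∃ t, w t = i x := by
  intro k
  induction k with
  | zero =>
    intro i
    refine ⟨0, Fin.elim0, ?_, fun x => x.elim0⟩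
    have hcomp : Compatible pairPart (invol pairPart) := by
      apply Setoid.ext
      intro a b
      constructor <;> intro _ <;> rfl
    have := hR.cond_comp_mem hR.pair_mem (hR.invol_mem hR.pair_mem) hcomp
    have he : kerPart (Fin.elim0 : Fin 0 → ℕ) Fin.elim0 = compPart pairPart (invol pairPart) :=
      Subsingleton.elim _ _
    rw [he]
    exact this
  | succ n ih =>
    intro i
    obtain ⟨m, w, hmem, hrange⟩ := ih (i ∘ Fin.castSucc)
    set c : ℕ := i (Fin.last n) with hc
    have hmem2 := hR.conn_tensor_mem (Fin.elim0 : Fin 0 → ℕ) w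
      (Fin.elim0 : Fin 0 → ℕ) (fun _ : Fin 2 => c) hmem hR.pair_mem rfl
      (kerPartA_const_pair c)
    have he : Fin.append (Fin.elim0 : Fin 0 → ℕ) (Fin.elim0 : Fin 0 → ℕ)
        = (Fin.elim0 : Fin (0 + 0) → ℕ) := by
      funext x
      exact x.elim0
    rw [he] at hmem2
    refine ⟨m + 2, Fin.append w (fun _ : Fin 2 => c), hmem2, ?_⟩
    intro x
    refine Fin.lastCases (motive := fun x => ∃ t, Fin.append w (fun _ : Fin 2 => c) t = i x)
      ?_ ?_ x
    · exact ⟨Fin.natAdd m 0, by rw [Fin.append_right]⟩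
    · intro x'
      obtain ⟨t, ht⟩ := hrange x'
      exact ⟨Fin.castAdd 2 t, by rw [Fin.append_left]; exact ht⟩

end StatementOneAux

/-- Every skew category of partitions is closed under
connected conditioned composition. -/
theorem skewCategory_connCondComp_closed (R : ∀ k l : ℕ, Set (Part k l))
    (hR : IsSkewCategory R) {k l l' : ℕ} (p : Part k l) (q : Part l l')
    (hp : p ∈ R k l) (hq : q ∈ R l l') (hpq : Compatible p q)
    (i : Fin k → ℕ) (j : Fin l → ℕ) (g : Fin l' → ℕ)
    (hij : kerPart i j = p) (hjg : kerPart j g = q) :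
    kerPart i g ∈ R k l' := by
  obtain ⟨m, w, hw_mem, hw_range⟩ := cups_mem R hR k i
  -- S = ker(i, j ++ w)
  have hS := hR.conn_tensor_mem i j (Fin.elim0 : Fin 0 → ℕ) w hp hw_mem hij rfl
  have heS : Fin.append i (Fin.elim0 : Fin 0 → ℕ) = i := by
    funext x
    rw [Fin.append_elim0]
    rfl
  rw [heS] at hS
  -- U = ker(j ++ w, g)
  have hgj : kerPart g j = invol q := by rw [← hjg, invol_kerPartA]
  have hU0 := hR.conn_tensor_mem g j (Fin.elim0 : Fin 0 → ℕ) w (hR.invol_mem hq) hw_mem hgj rfl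
  have heU : Fin.append g (Fin.elim0 : Fin 0 → ℕ) = g := by
    funext x
    rw [Fin.append_elim0]
    rfl
  rw [heU] at hU0
  have hU := hR.invol_mem hU0
  rw [invol_kerPartA] at hU
  -- compose
  have hcomp := hR.cond_comp_mem hS hU
    (compatible_kerPartA i (Fin.append j w) g)
  rwa [compPart_kerPart_s1 i (Fin.append j w) g (fun x => by
    obtain ⟨t, ht⟩ := hw_range x
    exact ⟨Fin.natAdd l t, by rw [Fin.append_right]; exact ht⟩)] at hcomp


end GTQG
end
end
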